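/- There exists a universal constant C > 0 such that for every integer N ≥ 1, every L > 0 and all x₁, x₂, x₃ ∈ [0,L], the 3×3 determinant ρ^{(3)}(x₁,x₂,x₃) := det( γ(x_i, x_j) )_{i,j=1}^{3} satisfies |ρ^{(3)}(x₁,x₂,x₃)| ≤ C·ρ⁹·(x₁ − x₂)²·(x₂ − x₃)²·(x₁ − x₃)², where ρ := N/L and γ(x,y) := (2/L)·Σ_{j=1}^{N} sin(πjx/L)·sin(πjy/L). -/

import Mathlib

open MeasureTheory Real

noncomputable section

/-- The one-body reduced density matrix of the Dirichlet free Fermi ground state on `[0,L]`. -/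
def fermiKernel (N : ℕ) (L : ℝ) (x y : ℝ) : ℝ :=
  (2 / L) * ∑ j ∈ Finset.Icc 1 N,
    Real.sin (π * (j : ℝ) * x / L) * Real.sin (π * (j : ℝ) * y / L)

/-!
Write `γ(x, y) = (2/L) ∑ⱼ φⱼ(x) φⱼ(y)` with `φⱼ(y) = sin (π j y / L)`, so that the matrix
`(γ(xᵢ, xₖ))` is `(2/L) E Eᵀ` with `Eᵢⱼ = φⱼ(xᵢ)`. Newton's interpolation formula factors
`E = W D`, where `W` is lower triangular with the Vandermonde determinant of the points and
`D_aj` is the `a`-th divided difference of `φⱼ`. Hence the determinant equals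
`(2/L)³ V(x)² det (D Dᵀ)`. For sorted points the divided differences of `sin (c ·)` are bounded
by `1`, `c`, `c²` (mean value theorem), and `c ≤ π N / L`, so the Leibniz expansion gives
`|det (D Dᵀ)| ≤ 3! N³ (π N / L)⁶`. Both sides are symmetric in the points, so sorting them costs
nothing.
-/

open Matrix

section Slope

variable {f f' : ℝ → ℝ} {M : ℝ}

theorem abs_sub_sub_deriv_mul_le (hf : ∀ x, HasDerivAt f (f' x) x)
    (hf' : ∀ x y, |f' x - f' y| ≤ M * |x - y|) (a b : ℝ) :
    |f b - f a - f' a * (b - a)| ≤ M * (b - a) ^ 2 := by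
  have hM : 0 ≤ M := by simpa using (abs_nonneg _).trans (hf' 1 0)
  have hg : ∀ x ∈ Set.uIcc a b,
      HasDerivWithinAt (fun y => f y - f' a * y) (f' x - f' a) (Set.uIcc a b) x := fun x _ =>
    ((hf x).sub ((hasDerivAt_id x).const_mul (f' a))).hasDerivWithinAt.congr_deriv (by simp)
  have hg' : ∀ x ∈ Set.uIcc a b, ‖f' x - f' a‖ ≤ M * |b - a| := fun x hx =>
    (hf' x a).trans (mul_le_mul_of_nonneg_left (Set.abs_sub_left_of_mem_uIcc hx) hM)
  have := (convex_uIcc a b).norm_image_sub_le_of_norm_hasDerivWithin_le hg hg'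
    Set.left_mem_uIcc Set.right_mem_uIcc
  rw [Real.norm_eq_abs, Real.norm_eq_abs] at this
  calc |f b - f a - f' a * (b - a)| = |f b - f' a * b - (f a - f' a * a)| := by ring_nf
    _ ≤ M * |b - a| * |b - a| := this
    _ = M * (b - a) ^ 2 := by rw [mul_assoc, abs_mul_abs_self, sq]

theorem abs_slope_sub_deriv_le (hf : ∀ x, HasDerivAt f (f' x) x)
    (hf' : ∀ x y, |f' x - f' y| ≤ M * |x - y|) {a b : ℝ} (hab : a ≠ b) :
    |slope f a b - f' a| ≤ M * |b - a| := by
  have hba : 0 < |b - a| := abs_pos.mpr (sub_ne_zero.mpr hab.symm)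
  have hmul : (slope f a b - f' a) * (b - a) = f b - f a - f' a * (b - a) := by
    rw [slope_def_field]
    field_simp [sub_ne_zero.mpr hab.symm]
  rw [← mul_le_mul_iff_left₀ hba, ← abs_mul, hmul, mul_assoc, abs_mul_abs_self, ← sq]
  exact abs_sub_sub_deriv_mul_le hf hf' a b

theorem slope_slope_eq {k : Type*} [Field k] (f : k → k) {a b c : k} (hab : a ≠ b) (hac : a ≠ c)
    (hbc : b ≠ c) : slope (slope f a) b c = (slope f b c - slope f a b) / (c - a) := by
  have := sub_ne_zero.mpr hab
  have := sub_ne_zero.mpr hac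
  have := sub_ne_zero.mpr hbc
  simp only [slope_def_field]
  field_simp
  ring

theorem abs_slope_slope_le (hf : ∀ x, HasDerivAt f (f' x) x)
    (hf' : ∀ x y, |f' x - f' y| ≤ M * |x - y|) {a b c : ℝ} (hab : a < b) (hbc : b < c) :
    |slope (slope f a) b c| ≤ M := by
  have hca : 0 < c - a := by linarith
  have hright := abs_slope_sub_deriv_le hf hf' hbc.ne
  have hleft := abs_slope_sub_deriv_le hf hf' hab.ne'
  rw [slope_comm] at hleft
  rw [abs_of_pos (sub_pos.mpr hbc)] at hright
  rw [abs_of_neg (sub_neg.mpr hab)] at hleft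
  rw [slope_slope_eq f hab.ne (hab.trans hbc).ne hbc.ne, abs_div, abs_of_pos hca,
    div_le_iff₀ hca]
  -- Compare both first slopes with `f' b`: this is where `b` has to lie between `a` and `c`.
  calc |slope f b c - slope f a b| ≤ |slope f b c - f' b| + |slope f a b - f' b| := by
        simpa only [abs_sub_comm (f' b)] using abs_sub_le (slope f b c) (f' b) (slope f a b)
    _ ≤ M * (c - a) := by linarith

end Slope

section Newton

variable {k : Type*} [Field k]

def newtonMatrix (x : Fin 3 → k) : Matrix (Fin 3) (Fin 3) k :=
  !![1, 0, 0; 1, x 1 - x 0, 0; 1, x 2 - x 0, (x 2 - x 0) * (x 2 - x 1)]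

def dividedDiffs (x : Fin 3 → k) (f : k → k) : Fin 3 → k :=
  ![f (x 0), slope f (x 0) (x 1), slope (slope f (x 0)) (x 1) (x 2)]

theorem newtonMatrix_mulVec_dividedDiffs (x : Fin 3 → k) (f : k → k) :
    newtonMatrix x *ᵥ dividedDiffs x f = f ∘ x := by
  have h := sub_smul_slope_vadd (slope f (x 0)) (x 1) (x 2)
  have h1 := sub_smul_slope_vadd f (x 0) (x 1)
  have h2 := sub_smul_slope_vadd f (x 0) (x 2)
  simp only [smul_eq_mul, vadd_eq_add] at h h1 h2
  ext i
  fin_cases i <;> simp [newtonMatrix, dividedDiffs, mulVec, dotProduct, Fin.sum_univ_three]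
  · linear_combination h1
  · linear_combination (x 2 - x 0) * h + h2

theorem det_newtonMatrix (x : Fin 3 → k) : (newtonMatrix x).det = (vandermonde x).det := by
  simp [newtonMatrix, det_vandermonde, det_fin_three, Fin.prod_univ_succ, Fin.prod_Ioi_succ]
  ring

theorem det_eval_mul_transpose {ι : Type*} [Fintype ι] (φ : ι → k → k) (x : Fin 3 → k) :
    (of (fun i j => φ j (x i)) * (of fun i j => φ j (x i))ᵀ).det =
      (vandermonde x).det ^ 2 *
        (of (fun a j => dividedDiffs x (φ j) a) * (of fun a j => dividedDiffs x (φ j) a)ᵀ).det := by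
  have hnewton : of (fun i j => φ j (x i)) =
      newtonMatrix x * of (fun a j => dividedDiffs x (φ j) a) := by
    ext i j
    exact (congrFun (newtonMatrix_mulVec_dividedDiffs x (φ j)) i).symm
  rw [hnewton, transpose_mul, Matrix.mul_assoc, ← Matrix.mul_assoc _ (_ᵀ), ← Matrix.mul_assoc,
    det_mul, det_mul, det_transpose, det_newtonMatrix]
  ring

end Newton

theorem abs_det_le_prod_mul_prod {R n : Type*} [CommRing R] [LinearOrder R]
    [IsStrictOrderedRing R] [Fintype n] [DecidableEq n] (A : Matrix n n R) (r s : n → R)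
    (h : ∀ i j, |A i j| ≤ r i * s j) :
    |A.det| ≤ (Fintype.card n).factorial * ((∏ i, r i) * ∏ i, s i) :=
  calc |A.det| = |∑ σ : Equiv.Perm n, Equiv.Perm.sign σ • ∏ i, A (σ i) i| := by rw [det_apply]
    _ ≤ ∑ σ : Equiv.Perm n, |Equiv.Perm.sign σ • ∏ i, A (σ i) i| := Finset.abs_sum_le_sum_abs _ _
    _ = ∑ σ : Equiv.Perm n, ∏ i, |A (σ i) i| := by
      simp [Units.smul_def, ← Int.cast_abs, Int.isUnit_iff_abs_eq.mp (Units.isUnit _),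
        Finset.abs_prod]
    _ ≤ ∑ σ : Equiv.Perm n, ∏ i, (r (σ i) * s i) := by gcongr; apply h
    _ = (Fintype.card n).factorial * ((∏ i, r i) * ∏ i, s i) := by
      simp [Finset.prod_mul_distrib, Equiv.prod_comp, Fintype.card_perm]

theorem abs_det_mul_transpose_le {n ι : Type*} [Fintype n] [DecidableEq n] [Fintype ι]
    (D : Matrix n ι ℝ) (u : n → ℝ) (h : ∀ a j, |D a j| ≤ u a) :
    |(D * Dᵀ).det| ≤
      (Fintype.card n).factorial * Fintype.card ι ^ Fintype.card n * (∏ a, u a) ^ 2 := by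
  have hentry : ∀ a b, |(D * Dᵀ) a b| ≤ (Fintype.card ι * u a) * u b := fun a b =>
    calc |(D * Dᵀ) a b| ≤ ∑ j, |D a j| * |D b j| := by
          simpa only [mul_apply, transpose_apply, abs_mul] using
            Finset.abs_sum_le_sum_abs (fun j => D a j * D b j) Finset.univ
      _ ≤ ∑ _j : ι, u a * u b := by
          gcongr with j
          · exact (abs_nonneg _).trans (h a j)
          · exact h a j
          · exact h b j
      _ = (Fintype.card ι * u a) * u b := by simp [mul_assoc]
  calc |(D * Dᵀ).det|
        ≤ (Fintype.card n).factorial * ((∏ a, (Fintype.card ι * u a)) * ∏ a, u a) :=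
        abs_det_le_prod_mul_prod _ _ _ hentry
    _ = (Fintype.card n).factorial * Fintype.card ι ^ Fintype.card n * (∏ a, u a) ^ 2 := by
      simp only [Finset.prod_mul_distrib, Finset.prod_const, Finset.card_univ]
      ring

theorem abs_dividedDiffs_sin_le {x : Fin 3 → ℝ} (hx : StrictMono x) {c : ℝ} (hc : 0 ≤ c)
    (a : Fin 3) : |dividedDiffs x (fun y => sin (c * y)) a| ≤ c ^ (a : ℕ) := by
  have hderiv : ∀ y, HasDerivAt (fun y => sin (c * y)) (c * cos (c * y)) y := fun y => by
    simpa [mul_comm] using ((hasDerivAt_id y).const_mul c).sin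
  have hlip : ∀ y z, |c * cos (c * y) - c * cos (c * z)| ≤ c ^ 2 * |y - z| := fun y z =>
    calc |c * cos (c * y) - c * cos (c * z)| = c * |cos (c * y) - cos (c * z)| := by
          rw [← mul_sub, abs_mul, abs_of_nonneg hc]
      _ ≤ c * |c * y - c * z| := mul_le_mul_of_nonneg_left (abs_cos_sub_cos_le _ _) hc
      _ = c ^ 2 * |y - z| := by rw [← mul_sub, abs_mul, abs_of_nonneg hc]; ring
  fin_cases a
  · simpa [dividedDiffs] using abs_sin_le_one (c * x 0)
  · have h01 : x 1 - x 0 ≠ 0 := sub_ne_zero.mpr (hx (by decide : (0 : Fin 3) < 1)).ne'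
    show |slope (fun y => sin (c * y)) (x 0) (x 1)| ≤ c ^ 1
    rw [slope_def_field, abs_div, div_le_iff₀ (abs_pos.mpr h01)]
    calc |sin (c * x 1) - sin (c * x 0)| ≤ |c * x 1 - c * x 0| := abs_sin_sub_sin_le _ _
      _ = c ^ 1 * |x 1 - x 0| := by rw [← mul_sub, abs_mul, abs_of_nonneg hc, pow_one]
  · exact abs_slope_slope_le hderiv hlip (hx (by decide)) (hx (by decide))

def dirichletMode (L : ℝ) (j : ℕ) (y : ℝ) : ℝ := sin (π * j * y / L)

theorem fermiKernel_matrix_eq {n : Type*} (N : ℕ) (L : ℝ) (x : n → ℝ) :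
    of (fun i k => fermiKernel N L (x i) (x k)) =
      (2 / L) • (of (fun i (j : Finset.Icc 1 N) => dirichletMode L j (x i)) *
        (of fun i (j : Finset.Icc 1 N) => dirichletMode L j (x i))ᵀ) := by
  ext i k
  simp only [fermiKernel, dirichletMode, Matrix.smul_apply, mul_apply, of_apply, transpose_apply,
    smul_eq_mul,
    Finset.sum_coe_sort (Finset.Icc 1 N) fun j : ℕ => sin (π * j * x i / L) * sin (π * j * x k / L)]

theorem abs_det_fermiKernel_le_of_strictMono {N : ℕ} {L : ℝ} (hL : 0 < L) {x : Fin 3 → ℝ}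
    (hx : StrictMono x) :
    |(of fun i k => fermiKernel N L (x i) (x k)).det| ≤
      48 * π ^ 6 * ((N : ℝ) / L) ^ 9 * (vandermonde x).det ^ 2 := by
  set K := π * N / L
  have hmodes :
      ∀ a (j : Finset.Icc 1 N), |dividedDiffs x (dirichletMode L j) a| ≤ K ^ (a : ℕ) := by
    intro a j
    have hc : 0 ≤ π * j / L := by positivity
    have hcK : π * j / L ≤ π * N / L := by
      gcongr
      exact_mod_cast (Finset.mem_Icc.mp j.2).2
    have hmode : dirichletMode L j = fun y => sin (π * j / L * y) := by
      ext y
      rw [dirichletMode, mul_div_right_comm]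
    rw [hmode]
    exact (abs_dividedDiffs_sin_le hx hc a).trans (pow_le_pow_left₀ hc hcK _)
  have hgram : |(of (fun a (j : Finset.Icc 1 N) => dividedDiffs x (dirichletMode L j) a) *
      (of fun a (j : Finset.Icc 1 N) => dividedDiffs x (dirichletMode L j) a)ᵀ).det| ≤
      6 * N ^ 3 * K ^ 6 :=
    (abs_det_mul_transpose_le _ _ hmodes).trans_eq (by
      simp only [Fintype.card_fin, Fintype.card_coe, Nat.card_Icc, add_tsub_cancel_right,
        Fin.prod_univ_three, Fin.val_zero, Fin.val_one, Fin.val_two, Nat.factorial]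
      ring)
  rw [fermiKernel_matrix_eq, det_smul, det_eval_mul_transpose, Fintype.card_fin, abs_mul, abs_mul,
    abs_pow, abs_of_pos (by positivity : (0 : ℝ) < 2 / L), abs_sq]
  calc _ ≤ (2 / L) ^ 3 * ((vandermonde x).det ^ 2 * (6 * N ^ 3 * K ^ 6)) := by gcongr
    _ = 48 * π ^ 6 * ((N : ℝ) / L) ^ 9 * (vandermonde x).det ^ 2 := by
        simp only [K]
        field_simp
        ring

theorem sq_det_vandermonde_comp_perm {R : Type*} [CommRing R] {n : ℕ} (x : Fin n → R)
    (σ : Equiv.Perm (Fin n)) : (vandermonde (x ∘ σ)).det ^ 2 = (vandermonde x).det ^ 2 := by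
  rw [show vandermonde (x ∘ σ) = (vandermonde x).submatrix σ id from rfl, det_permute, mul_pow,
    ← Int.cast_pow, ← Units.val_pow_eq_pow_val, Int.units_sq, Units.val_one, Int.cast_one, one_mul]

theorem abs_det_fermiKernel_le {N : ℕ} {L : ℝ} (hL : 0 < L) (x : Fin 3 → ℝ) :
    |(of fun i k => fermiKernel N L (x i) (x k)).det| ≤
      48 * π ^ 6 * ((N : ℝ) / L) ^ 9 * (vandermonde x).det ^ 2 := by
  by_cases hinj : Function.Injective x
  · obtain ⟨σ, hσ⟩ : ∃ σ : Equiv.Perm (Fin 3), Monotone (x ∘ σ) := ⟨_, Tuple.monotone_sort x⟩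
    have hsorted := abs_det_fermiKernel_le_of_strictMono (N := N) hL
      (hσ.strictMono_of_injective (hinj.comp σ.injective))
    have hperm : (of fun i k => fermiKernel N L ((x ∘ σ) i) ((x ∘ σ) k)) =
        (of fun i k => fermiKernel N L (x i) (x k)).submatrix σ σ := rfl
    rwa [hperm, det_submatrix_equiv_self, sq_det_vandermonde_comp_perm] at hsorted
  · obtain ⟨i, j, hij, hne⟩ : ∃ i j, x i = x j ∧ i ≠ j := by
      simpa [Function.Injective] using hinj
    rw [det_zero_of_row_eq hne (by ext k; simp [hij]), abs_zero]
    positivity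

theorem statement_14 :
    ∃ C : ℝ, 0 < C ∧
      ∀ (N : ℕ) (L : ℝ), 1 ≤ N → 0 < L →
        ∀ x₁ x₂ x₃ : ℝ, x₁ ∈ Set.Icc (0 : ℝ) L → x₂ ∈ Set.Icc (0 : ℝ) L →
          x₃ ∈ Set.Icc (0 : ℝ) L →
          |Matrix.det (Matrix.of fun i j : Fin 3 =>
              fermiKernel N L (![x₁, x₂, x₃] i) (![x₁, x₂, x₃] j))| ≤
            C * ((N : ℝ) / L) ^ 9 * (x₁ - x₂) ^ 2 * (x₂ - x₃) ^ 2 * (x₁ - x₃) ^ 2 := by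
  refine ⟨48 * π ^ 6, by positivity, fun N L _ hL x₁ x₂ x₃ _ _ _ => ?_⟩
  have hvandermonde : (vandermonde ![x₁, x₂, x₃]).det ^ 2 =
      (x₁ - x₂) ^ 2 * (x₂ - x₃) ^ 2 * (x₁ - x₃) ^ 2 := by
    simp [det_vandermonde, Fin.prod_univ_succ, Fin.prod_Ioi_succ]
    ring
  calc _ ≤ _ := abs_det_fermiKernel_le hL ![x₁, x₂, x₃]
    _ = _ := by rw [hvandermonde]; ring
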